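/- Let H be a real inner product space, a_h : H × H → ℝ a bilinear form that is bounded with constant c_b (|a_h(v,w)| ≤ c_b·‖v‖₁·‖w‖₁ for a seminorm ‖·‖₁), and suppose vectors U, V ∈ H and f ∈ H satisfy ‖V‖² = ⟨f, V⟩ − a_h(U, V). If moreover the inverse inequality ‖w‖₁ ≤ c_i·h⁻¹·‖w‖ holds for all w in a subspace containing V, and ‖v‖₋ ≤ c_α‖v‖₁ holds for the duality pairing bound ⟨f,V⟩ ≤ ‖f‖₊·‖V‖₋, then ‖V‖ ≤ c_i·h⁻¹·(c_α‖f‖₊ + c_b‖U‖₁). -/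

import Mathlib

/-!
Testing the discrete equation against `V` itself gives the energy bound
`‖V‖² ≤ (c_α ‖f‖₊ + c_b ‖U‖₁) ‖V‖₁`; the inverse inequality turns the right-hand side into a
multiple of `‖V‖`, which is then cancelled.
-/

lemma le_mul_of_sq_le_mul_of_le_mul {R : Type*} [CommRing R] [LinearOrder R]
    [IsStrictOrderedRing R] {x y a b : R} (ha : 0 ≤ a) (hb : 0 ≤ b)
    (hxy : x ^ 2 ≤ a * y) (hyx : y ≤ b * x) : x ≤ b * a := by
  rcases le_or_gt x 0 with hx | hx
  · exact hx.trans (mul_nonneg hb ha)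
  have hsq : x * x ≤ b * a * x :=
    calc x * x = x ^ 2 := (sq x).symm
      _ ≤ a * (b * x) := hxy.trans (mul_le_mul_of_nonneg_left hyx ha)
      _ = b * a * x := by ring
  exact le_of_mul_le_mul_right hsq hx

lemma norm_sq_le_mul_of_eq_inner_sub {H : Type*} [NormedAddCommGroup H] [InnerProductSpace ℝ H]
    {ah : H → H → ℝ} {n1 np nm : H → ℝ} {c_b c_α : ℝ} {U V f : H} (hf : 0 ≤ np f)
    (hbound : |ah U V| ≤ c_b * n1 U * n1 V)
    (heq : ‖V‖ ^ 2 = inner ℝ f V - ah U V)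
    (hpair : (inner ℝ f V : ℝ) ≤ np f * nm V)
    (hemb : nm V ≤ c_α * n1 V) :
    ‖V‖ ^ 2 ≤ (c_α * np f + c_b * n1 U) * n1 V := by
  have hsource : inner ℝ f V ≤ np f * (c_α * n1 V) :=
    hpair.trans (mul_le_mul_of_nonneg_left hemb hf)
  have hform : -ah U V ≤ c_b * n1 U * n1 V := (neg_le_abs _).trans hbound
  calc ‖V‖ ^ 2 = inner ℝ f V - ah U V := heq
    _ ≤ np f * (c_α * n1 V) + c_b * n1 U * n1 V := by linarith
    _ = (c_α * np f + c_b * n1 U) * n1 V := by ring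

theorem stmt_9_general {H : Type*} [NormedAddCommGroup H] [InnerProductSpace ℝ H]
    (ah : H → H → ℝ) (n1 np nm : H → ℝ)
    (c_b c_i c_α h : ℝ) (hcb : 0 < c_b) (hci : 0 < c_i) (hcα : 0 < c_α) (hh : 0 < h)
    (hn1 : ∀ v, 0 ≤ n1 v) (hnp : ∀ v, 0 ≤ np v)
    (U V f : H)
    (hbound : |ah U V| ≤ c_b * n1 U * n1 V)
    (heq : ‖V‖ ^ 2 = inner ℝ f V - ah U V)
    (hpair : (inner ℝ f V : ℝ) ≤ np f * nm V)
    (hemb : nm V ≤ c_α * n1 V)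
    (hinv : n1 V ≤ c_i * h⁻¹ * ‖V‖) :
    ‖V‖ ≤ c_i * h⁻¹ * (c_α * np f + c_b * n1 U) := by
  have hdata : 0 ≤ c_α * np f + c_b * n1 U := by
    have := hnp f; have := hn1 U
    positivity
  have hscale : 0 ≤ c_i * h⁻¹ := by positivity
  exact le_mul_of_sq_le_mul_of_le_mul hdata hscale
    (norm_sq_le_mul_of_eq_inner_sub (hnp f) hbound heq hpair hemb) hinv

/-- Abstract Lemma 3.4: if ‖V‖² = ⟨f,V⟩ − a_h(U,V) with the pairing, embedding,
    continuity and inverse-inequality bounds, then ‖V‖ ≤ c_i h⁻¹ (c_α‖f‖₊ + c_b‖U‖₁). -/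
theorem stmt_9 {H : Type*} [NormedAddCommGroup H] [InnerProductSpace ℝ H]
    (ah : H → H → ℝ) (n1 np nm : H → ℝ)
    (c_b c_i c_α h : ℝ) (hcb : 0 < c_b) (hci : 0 < c_i) (hcα : 0 < c_α) (hh : 0 < h)
    (hn1 : ∀ v, 0 ≤ n1 v) (hnp : ∀ v, 0 ≤ np v) (hnm : ∀ v, 0 ≤ nm v)
    (U V f : H)
    (hbound : |ah U V| ≤ c_b * n1 U * n1 V)
    (heq : ‖V‖ ^ 2 = inner ℝ f V - ah U V)
    (hpair : (inner ℝ f V : ℝ) ≤ np f * nm V)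
    (hemb : nm V ≤ c_α * n1 V)
    (hinv : n1 V ≤ c_i * h⁻¹ * ‖V‖) :
    ‖V‖ ≤ c_i * h⁻¹ * (c_α * np f + c_b * n1 U) :=
  stmt_9_general ah n1 np nm c_b c_i c_α h hcb hci hcα hh hn1 hnp U V f hbound heq hpair hemb hinv
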